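/- For all integers n ≥ 1 and h ≥ 0 with h ≡ n (mod 2), the number V(n,h) of ±1-paths of length n with |S_k| ≤ h for all k and |S_n| = h satisfies V(n,h) = 2 Σ_{k ≥ 0, (h+1)(2k+1) ≤ n+1} (−1)^k · ((h+1)(2k+1)/(n+1)) · C(n+1, (n+1−(h+1)(2k+1))/2), an identity of rational numbers (the binomial arguments are non-negative integers by the parity assumption). Equivalently, with n = 2m−1 and τ_{h,k} = (h+1)(2k+1)/2, the probability p_{2m−1}^{(h)} equals (4/4^m) Σ_{k≥0} (−1)^k (τ_{h,k}/m) C(2m, m−τ_{h,k}) whenever h+1 ≡ 2m (mod 2). -/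

import Mathlib

/-- Partial sum `S_k` of the `±1`-walk encoded by `ε : Fin n → Bool`
(`true` = step `+1`, `false` = step `-1`). -/
def walkSum (n : ℕ) (ε : Fin n → Bool) (k : ℕ) : ℤ :=
  ∑ i : Fin n, if (i : ℕ) < k then (if ε i then 1 else -1) else 0

/-- `V n h`: number of `±1`-paths of length `n` with `|S_k| ≤ h` for all `k` and `|S_n| = h`. -/
noncomputable def V (n h : ℕ) : ℕ :=
  Nat.card {ε : Fin n → Bool //
    (∀ k ≤ n, |walkSum n ε k| ≤ (h : ℤ)) ∧ |walkSum n ε n| = (h : ℤ)}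

/-!
A path counted by `V n h` ends at `h` or, mirrored, at `-h`, so `V(n,h) = 2 W_n(h)`, where
`W_n(a)` counts the paths from `0` to `a` that stay in `[-h, h]`.  Inside the strip `W_n(a)`
satisfies Pascal's recursion in `n`, and it vanishes on the walls `±(h+1)`.  By the method of
images, so does the alternating sum of free path counts `P_n` over the images of `a` under the
reflections in the two walls; hence the two agree.  At `a = h` the images pair up into differences
`P_n(m-1) - P_n(m+1)` with `m = (h+1)(2k+1)`, and the ballot formula evaluates each of them as
`m/(n+1) · C(n+1, (n+1-m)/2)`.
-/

open Finset

theorem add_one_mul_choose_succ_sub_choose (n j : ℕ) :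
    ((n : ℚ) + 1) * (n.choose (j + 1) - n.choose j) =
      (n + 1).choose (j + 1) * ((n : ℚ) - 2 * j - 1) := by
  have h₁ : ((n : ℚ) + 1) * n.choose j = (n + 1).choose (j + 1) * ((j : ℚ) + 1) := by
    exact_mod_cast Nat.add_one_mul_choose_eq n j
  have h₂ : ((n + 1).choose (j + 1) : ℚ) = n.choose j + n.choose (j + 1) := by
    exact_mod_cast Nat.choose_succ_succ' n j
  linear_combination -((n : ℚ) + 1) * h₂ - 2 * h₁

/-- The number of unconstrained `±1`-paths of length `n` from `0` to `x`. -/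
def pathCount : ℕ → ℤ → ℤ
  | 0, x => if x = 0 then 1 else 0
  | n + 1, x => pathCount n (x - 1) + pathCount n (x + 1)

namespace pathCount

theorem eq_zero_of_lt_abs {n : ℕ} {x : ℤ} (hx : (n : ℤ) < |x|) : pathCount n x = 0 := by
  induction n generalizing x with
  | zero => simp_all [pathCount]
  | succ n ih =>
    have h₁ := abs_sub_abs_le_abs_sub x 1
    have h₂ := abs_sub_abs_le_abs_sub x (-1)
    simp only [abs_one, abs_neg, sub_neg_eq_add] at h₁ h₂
    push_cast at hx
    rw [pathCount, ih (by linarith), ih (by linarith), add_zero]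

theorem neg (n : ℕ) (x : ℤ) : pathCount n (-x) = pathCount n x := by
  induction n generalizing x with
  | zero => simp [pathCount]
  | succ n ih =>
    rw [pathCount, pathCount, add_comm, ← ih (x - 1), ← ih (x + 1)]
    ring_nf

theorem hasFiniteSupport (n : ℕ) : (pathCount n).HasFiniteSupport :=
  (Set.finite_Icc (-(n : ℤ)) n).subset fun _ hx ↦
    abs_le.mp (not_lt.mp fun h ↦ hx (eq_zero_of_lt_abs h))

theorem hasFiniteSupport_comp_affine (n : ℕ) (c : ℤ) {d : ℤ} (hd : d ≠ 0) :
    (fun j : ℤ ↦ pathCount n (c + d * j)).HasFiniteSupport :=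
  (hasFiniteSupport n).fun_comp_of_injective fun _ _ h ↦ mul_left_cancel₀ hd (add_left_cancel h)

theorem sub_two_mul_eq_choose (n k : ℕ) : pathCount n (n - 2 * k) = n.choose k := by
  induction n generalizing k with
  | zero => cases k <;> simp [pathCount]; omega
  | succ n ih =>
    rw [pathCount]
    rcases k with _ | k
    · rw [eq_zero_of_lt_abs (x := _ + 1) (by rw [abs_of_nonneg (by omega)]; omega)]
      simpa using ih 0
    · rw [Nat.choose_succ_succ, Nat.cast_add (n.choose k), ← ih k, ← ih (k + 1), add_comm]
      congr 2 <;> push_cast <;> ring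

theorem ballot {n m : ℕ} (hm : m % 2 = (n + 1) % 2) :
    ((pathCount n (m - 1) - pathCount n (m + 1) : ℤ) : ℚ) =
      if m ≤ n + 1 then (m : ℚ) / (n + 1) * ((n + 1).choose ((n + 1 - m) / 2) : ℚ)
      else 0 := by
  split_ifs with hmn
  · obtain ⟨κ, hκ⟩ : ∃ κ, n + 1 = m + 2 * κ := ⟨(n + 1 - m) / 2, by omega⟩
    rw [show (n + 1 - m) / 2 = κ by omega]
    rcases κ with _ | j
    · obtain rfl : m = n + 1 := by omega
      have hn : pathCount n n = 1 := by simpa using sub_two_mul_eq_choose n 0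
      rw [eq_zero_of_lt_abs (x := _ + 1) (by rw [abs_of_nonneg (by omega)]; omega)]
      push_cast
      rw [add_sub_cancel_right, hn]
      field_simp
      simp
    · have hm₁ : (m : ℤ) - 1 = n - 2 * (j + 1 : ℕ) := by omega
      have hm₂ : (m : ℤ) + 1 = n - 2 * (j : ℕ) := by omega
      have hm₃ : (m : ℚ) = n - 2 * j - 1 := by
        have : (m : ℤ) = n - 2 * j - 1 := by omega
        exact_mod_cast this
      rw [hm₁, hm₂, sub_two_mul_eq_choose, sub_two_mul_eq_choose, hm₃]
      push_cast
      field_simp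
      linear_combination add_one_mul_choose_succ_sub_choose n j
  · rw [eq_zero_of_lt_abs, eq_zero_of_lt_abs, sub_zero, Int.cast_zero] <;>
      rw [abs_of_nonneg (by omega)] <;> omega

end pathCount

theorem finsum_comp_four_mul_add_one {g : ℤ → ℤ} (hg : ∀ m, g (-m) = -g m) :
    ∑ᶠ j : ℤ, g (4 * j + 1) = ∑ᶠ k : ℕ, (-1) ^ k * g (2 * k + 1) := by
  rw [← finsum_comp_equiv Equiv.intEquivNat]
  refine finsum_congr fun j ↦ ?_
  -- `Equiv.intEquivNat` sends `j ≥ 0` to `k = 2j` and `-(l+1)` to `k = 2l+1`;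
  -- in both cases `4j + 1 = (-1)^k (2k+1)`.
  rcases j with j | j
  · rw [show Equiv.intEquivNat (.ofNat j) = 2 * j from
      show Equiv.natSumNatEquivNat (.inl j) = 2 * j by simp, pow_mul, neg_one_sq, one_pow,
      one_mul, Int.ofNat_eq_natCast]
    push_cast
    ring_nf
  · rw [show Equiv.intEquivNat (.negSucc j) = 2 * j + 1 from
      show Equiv.natSumNatEquivNat (.inr j) = 2 * j + 1 by simp, pow_succ, pow_mul,
      neg_one_sq, one_pow, one_mul, Int.negSucc_eq, neg_one_mul, ← hg]
    push_cast
    ring_nf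

/-- Method of images for the absorbing walls `±w`: `a + 4wj` runs over the images of `a` under an
even number of reflections in the walls, `2w - a + 4wj` over those under an odd number. -/
noncomputable def reflectionSum (w : ℤ) (n : ℕ) (a : ℤ) : ℤ :=
  ∑ᶠ j : ℤ, (pathCount n (a + 4 * w * j) - pathCount n (2 * w - a + 4 * w * j))

namespace reflectionSum

theorem hasFiniteSupport_summand {w : ℤ} (hw : w ≠ 0) (n : ℕ) (a : ℤ) :
    (fun j : ℤ ↦
      pathCount n (a + 4 * w * j) - pathCount n (2 * w - a + 4 * w * j)).HasFiniteSupport :=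
  (pathCount.hasFiniteSupport_comp_affine n _ (by positivity)).sub
    (pathCount.hasFiniteSupport_comp_affine n _ (by positivity))

theorem succ {w : ℤ} (hw : w ≠ 0) (n : ℕ) (a : ℤ) :
    reflectionSum w (n + 1) a = reflectionSum w n (a - 1) + reflectionSum w n (a + 1) := by
  rw [reflectionSum, reflectionSum, reflectionSum, ← finsum_add_distrib
    (hasFiniteSupport_summand hw n _) (hasFiniteSupport_summand hw n _)]
  refine finsum_congr fun j ↦ ?_
  simp only [pathCount]
  ring_nf

theorem wall (w : ℤ) (n : ℕ) : reflectionSum w n w = 0 := by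
  simp [reflectionSum, two_mul]

theorem neg_wall {w : ℤ} (hw : w ≠ 0) (n : ℕ) : reflectionSum w n (-w) = 0 := by
  set F : ℤ → ℤ := fun j ↦ pathCount n (-w + 4 * w * j)
  have hF : F.HasFiniteSupport := pathCount.hasFiniteSupport_comp_affine n _ (by positivity)
  calc reflectionSum w n (-w) = ∑ᶠ j, (F j - F (Equiv.addRight 1 j)) := by
        refine finsum_congr fun j ↦ ?_
        simp only [F, Equiv.coe_addRight]
        ring_nf
    _ = 0 := by
        rw [finsum_sub_distrib hF (hF.fun_comp_of_injective (Equiv.injective _)), finsum_comp_equiv,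
          sub_self]

theorem zero {w a : ℤ} (ha : |a| < w) : reflectionSum w 0 a = if a = 0 then 1 else 0 := by
  have hw : w ≠ 0 := ((abs_nonneg a).trans_lt ha).ne'
  have hodd (j : ℤ) : 2 * w - a + 4 * w * j ≠ 0 := fun hj ↦ by
    obtain rfl : a = 0 := Int.eq_zero_of_abs_lt_dvd ⟨2 + 4 * j, by linarith⟩ ha
    have := (mul_eq_zero.mp (show w * (2 + 4 * j) = 0 by linarith)).resolve_left hw
    omega
  have heven {j : ℤ} (hj : j ≠ 0) : a + 4 * w * j ≠ 0 := fun hj' ↦ by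
    obtain rfl : a = 0 := Int.eq_zero_of_abs_lt_dvd ⟨-4 * j, by linarith⟩ ha
    have := (mul_eq_zero.mp (show w * (4 * j) = 0 by linarith)).resolve_left hw
    omega
  rw [reflectionSum, finsum_eq_single _ 0 fun j hj ↦ by simp [pathCount, hodd, heven hj]]
  simpa [pathCount] using hodd 0

theorem sub_one {w : ℤ} (hw : 0 < w) (n : ℕ) :
    reflectionSum w n (w - 1) = ∑ k ∈ range (n + 1),
      (-1) ^ k * (pathCount n (w * (2 * k + 1) - 1) - pathCount n (w * (2 * k + 1) + 1)) := by
  set g : ℤ → ℤ := fun m ↦ pathCount n (w * m - 1) - pathCount n (w * m + 1)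
  have g_neg (m : ℤ) : g (-m) = -g m := by
    simp only [g, ← pathCount.neg n (w * m + 1), ← pathCount.neg n (w * m - 1)]
    ring_nf
  calc reflectionSum w n (w - 1) = ∑ᶠ j : ℤ, g (4 * j + 1) :=
        finsum_congr fun j ↦ by simp only [g]; ring_nf
    _ = ∑ᶠ k : ℕ, (-1) ^ k * g (2 * k + 1) := finsum_comp_four_mul_add_one g_neg
    _ = _ := by
        refine finsum_eq_sum_of_support_subset _ fun k hk ↦ ?_
        rw [coe_range, Set.mem_Iio]
        by_contra hkn
        have hlt : (n : ℤ) < w * (2 * k + 1) - 1 := by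
          have : (n : ℤ) + 1 ≤ k := by exact_mod_cast not_lt.mp hkn
          nlinarith
        have hlt' : (n : ℤ) < w * (2 * k + 1) + 1 := by linarith
        refine hk ?_
        simp only [g, pathCount.eq_zero_of_lt_abs (hlt.trans_le (le_abs_self _)),
          pathCount.eq_zero_of_lt_abs (hlt'.trans_le (le_abs_self _)), sub_zero, mul_zero]

end reflectionSum

theorem walkSum_snoc_of_le {n k : ℕ} (ε : Fin n → Bool) (s : Bool) (hk : k ≤ n) :
    walkSum (n + 1) (Fin.snoc ε s) k = walkSum n ε k := by
  simp [walkSum, Fin.sum_univ_castSucc, hk.not_gt]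

theorem walkSum_snoc_self (n : ℕ) (ε : Fin n → Bool) (s : Bool) :
    walkSum (n + 1) (Fin.snoc ε s) (n + 1) = walkSum n ε n + if s then 1 else -1 := by
  simp [walkSum, Fin.sum_univ_castSucc]

theorem walkSum_not (n : ℕ) (ε : Fin n → Bool) (k : ℕ) :
    walkSum n (fun i ↦ !ε i) k = -walkSum n ε k := by
  simp only [walkSum, ← sum_neg_distrib]
  refine sum_congr rfl fun i _ ↦ ?_
  split_ifs <;> simp_all

noncomputable def stripCount (h n : ℕ) (a : ℤ) : ℕ :=
  Nat.card {ε : Fin n → Bool //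
    (∀ k ≤ n, |walkSum n ε k| ≤ (h : ℤ)) ∧ walkSum n ε n = a}

namespace stripCount

theorem eq_zero_of_lt_abs {h n : ℕ} {a : ℤ} (ha : (h : ℤ) < |a|) : stripCount h n a = 0 := by
  rw [stripCount, Nat.card_eq_zero]
  exact Or.inl ⟨fun ⟨_, hle, hend⟩ ↦ (hle n le_rfl).not_gt (hend ▸ ha)⟩

theorem zero (h : ℕ) (a : ℤ) : stripCount h 0 a = if a = 0 then 1 else 0 := by
  have hS : ∀ (ε : Fin 0 → Bool) k, walkSum 0 ε k = 0 := fun _ _ ↦ by simp [walkSum]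
  simp only [stripCount, hS, abs_zero, Nat.cast_nonneg, implies_true, true_and]
  split_ifs with ha <;> simp [ha, eq_comm]

theorem neg (h n : ℕ) (a : ℤ) : stripCount h n (-a) = stripCount h n a := by
  refine Nat.card_congr (Equiv.subtypeEquiv (Equiv.piCongrRight fun _ ↦ Equiv.boolNot) ?_)
  intro ε
  show _ ↔ (∀ k ≤ n, |walkSum n (fun i ↦ !ε i) k| ≤ (h : ℤ)) ∧
    walkSum n (fun i ↦ !ε i) n = a
  simp only [walkSum_not, abs_neg, neg_eq_iff_eq_neg]

theorem succ {h n : ℕ} {a : ℤ} (ha : |a| ≤ h) :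
    stripCount h (n + 1) a = stripCount h n (a - 1) + stripCount h n (a + 1) := by
  set step : Bool → ℤ := fun s ↦ if s then 1 else -1
  have hsnoc : ∀ p : Bool × (Fin n → Bool),
      ((∀ k ≤ n, |walkSum n p.2 k| ≤ (h : ℤ)) ∧ walkSum n p.2 n = a - step p.1) ↔
        (∀ k ≤ n + 1, |walkSum (n + 1) (Fin.snocEquiv _ p) k| ≤ (h : ℤ)) ∧
          walkSum (n + 1) (Fin.snocEquiv _ p) (n + 1) = a := by
    rintro ⟨s, ε⟩
    rw [show Fin.snocEquiv (fun _ ↦ Bool) (s, ε) = Fin.snoc ε s from rfl, walkSum_snoc_self,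
      ← eq_sub_iff_add_eq]
    refine and_congr_left fun hend ↦ ⟨fun hle k hk ↦ ?_, fun hle k hk ↦ ?_⟩
    · rcases hk.lt_or_eq with hk | rfl
      · rw [walkSum_snoc_of_le _ _ (by omega)]; exact hle k (by omega)
      · rw [walkSum_snoc_self, hend, sub_add_cancel]; exact ha
    · rw [← walkSum_snoc_of_le ε s hk]; exact hle k (by omega)
  calc stripCount h (n + 1) a
      = Nat.card (Σ s : Bool, {ε : Fin n → Bool //
          (∀ k ≤ n, |walkSum n ε k| ≤ (h : ℤ)) ∧ walkSum n ε n = a - step s}) :=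
        Nat.card_congr ((Equiv.subtypeEquiv _ hsnoc).symm.trans
          (Equiv.subtypeProdEquivSigmaSubtype fun s ε ↦ _))
    _ = stripCount h n (a - 1) + stripCount h n (a + 1) := by
        rw [Nat.card_sigma, Fintype.sum_bool]
        simp [step, stripCount]

end stripCount

theorem stripCount_eq_reflectionSum (h n : ℕ) {a : ℤ} (ha : |a| ≤ h) :
    (stripCount h n a : ℤ) = reflectionSum (h + 1) n a := by
  induction n generalizing a with
  | zero =>
    rw [stripCount.zero, reflectionSum.zero (by omega)]
    split_ifs <;> rfl
  | succ n ih =>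
    have hstrip {b : ℤ} (hb : |b| ≤ h + 1) :
        (stripCount h n b : ℤ) = reflectionSum (h + 1) n b := by
      rcases hb.lt_or_eq with hb | hb
      · exact ih (Int.lt_add_one_iff.mp hb)
      · rw [stripCount.eq_zero_of_lt_abs (by omega)]
        rcases abs_eq_abs.mp (hb.trans (abs_of_nonneg (by positivity)).symm) with rfl | rfl
        · rw [reflectionSum.wall]; rfl
        · rw [reflectionSum.neg_wall (by positivity)]; rfl
    have hsub : |a - 1| ≤ h + 1 := (abs_sub _ _).trans (by rw [abs_one]; omega)
    have hadd : |a + 1| ≤ h + 1 := (abs_add_le _ _).trans (by rw [abs_one]; omega)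
    rw [stripCount.succ ha, reflectionSum.succ (by positivity), Nat.cast_add, hstrip hsub,
      hstrip hadd]

theorem V_eq_stripCount_add_stripCount_neg {n h : ℕ} (hh : 0 < h) :
    V n h = stripCount h n h + stripCount h n (-h) := by
  have hdisj : Disjoint
      (fun ε ↦ (∀ k ≤ n, |walkSum n ε k| ≤ (h : ℤ)) ∧ walkSum n ε n = h)
      (fun ε ↦ (∀ k ≤ n, |walkSum n ε k| ≤ (h : ℤ)) ∧ walkSum n ε n = -h) := by
    refine le_compl_iff_disjoint_right.mp fun _ ⟨_, h₁⟩ ⟨_, h₂⟩ ↦ ?_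
    omega
  classical
  rw [V, stripCount, stripCount, ← Nat.card_sum]
  refine Nat.card_congr ((Equiv.subtypeEquivRight fun ε ↦ ?_).trans (subtypeOrEquiv _ _ hdisj))
  rw [abs_eq (Nat.cast_nonneg h), and_or_left]

theorem V_eq_two_mul_stripCount {n h : ℕ} (hn : 1 ≤ n) : V n h = 2 * stripCount h n h := by
  rcases Nat.eq_zero_or_pos h with rfl | hh
  · obtain ⟨m, rfl⟩ : ∃ m, n = m + 1 := ⟨n - 1, by omega⟩
    have hV : V (m + 1) 0 = stripCount 0 (m + 1) 0 :=
      Nat.card_congr (Equiv.subtypeEquivRight fun ε ↦ by rw [Nat.cast_zero, abs_eq_zero])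
    have hzero : stripCount 0 (m + 1) 0 = 0 := by
      rw [stripCount.succ (by simp), stripCount.eq_zero_of_lt_abs (by simp),
        stripCount.eq_zero_of_lt_abs (by simp)]
    rw [hV, Nat.cast_zero, hzero]
  · rw [V_eq_stripCount_add_stripCount_neg hh, stripCount.neg, two_mul]

/-- Explicit formula for `V(n,h)`: for `n ≥ 1` and `h ≡ n (mod 2)`,
`V(n,h) = 2 Σ_{k≥0, (h+1)(2k+1) ≤ n+1} (−1)^k ((h+1)(2k+1)/(n+1)) C(n+1, (n+1−(h+1)(2k+1))/2)`. -/
theorem V_explicit (n h : ℕ) (hn : 1 ≤ n) (hpar : h % 2 = n % 2) :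
    (V n h : ℚ) =
      2 * ∑ k ∈ Finset.range (n + 1),
        (if (h + 1) * (2 * k + 1) ≤ n + 1 then
          (-1 : ℚ) ^ k * (((h : ℚ) + 1) * (2 * (k : ℚ) + 1) / ((n : ℚ) + 1)) *
            ((n + 1).choose ((n + 1 - (h + 1) * (2 * k + 1)) / 2) : ℚ)
        else 0) := by
  have hrefl := reflectionSum.sub_one (w := h + 1) (by positivity) n
  rw [add_sub_cancel_right] at hrefl
  have hV : (V n h : ℤ) = 2 * reflectionSum (h + 1) n h := by
    rw [V_eq_two_mul_stripCount hn, Nat.cast_mul, Nat.cast_ofNat,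
      stripCount_eq_reflectionSum h n (by simp)]
  rw [← Int.cast_natCast, hV, hrefl]
  push_cast
  congr 1
  refine sum_congr rfl fun k _ ↦ ?_
  have hm : (h + 1) * (2 * k + 1) % 2 = (n + 1) % 2 := by
    rw [Nat.mul_mod, show (2 * k + 1) % 2 = 1 by omega, mul_one, Nat.mod_mod]
    omega
  have hballot := pathCount.ballot hm
  push_cast at hballot
  rw [hballot]
  split_ifs <;> ring
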